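/- Let X be a δ-hyperbolic space, x ∈ X a basepoint, and g an isometry of X with d(x,gx) ≥ 2(gx, g⁻¹x)_x + C, where C depends only on δ. Then the stable translation length satisfies τ(g) = d(x,gx) − 2(gx, g⁻¹x)_x + O(δ). -/

import Mathlib

/-!
Along the orbit `yₙ = gⁿx` consecutive points are at distance `L = d(x,gx)` and every corner
`(yₙ, yₙ₊₂)_{yₙ₊₁}` equals `P = (gx, g⁻¹x)_x`. When `L > 2P + 2δ`, the four-point condition at
`yₙ₊₂` shows, by induction on `n`, that the corners seen from the basepoint, `(x, yₙ₊₂)_{yₙ₊₁}`,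
stay within `δ` of `P`. Since `d(x, yₙ₊₂) = d(x, yₙ₊₁) + L − 2(x, yₙ₊₂)_{yₙ₊₁}`, this gives
`d(x, yₙ) = n(L − 2P) + 2P ± 2nδ`, hence `τ(g) = L − 2P ± 2δ`.
-/

open Filter

/-- The Gromov product `(y,z)_x = (d(x,y) + d(x,z) − d(y,z))/2`. -/
noncomputable def gromovProduct {X : Type*} [MetricSpace X] (x y z : X) : ℝ :=
  (dist x y + dist x z - dist y z) / 2

/-- The stable translation length `τ(g) = lim_n d(x, gⁿx)/n` (as a `liminf`). -/
noncomputable def stableTranslationLength {X : Type*} [MetricSpace X]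
    (g : X → X) (x : X) : ℝ :=
  atTop.liminf fun n : ℕ => dist x (g^[n] x) / n

open Topology

def IsGromovHyperbolic (X : Type*) [MetricSpace X] (δ : ℝ) : Prop :=
  ∀ w p q r : X, min (gromovProduct w p q) (gromovProduct w q r) - δ ≤ gromovProduct w p r

section GromovProduct

variable {X Y : Type*} [MetricSpace X] [MetricSpace Y]

theorem gromovProduct_comm (x y z : X) : gromovProduct x y z = gromovProduct x z y := by
  unfold gromovProduct
  rw [dist_comm y z]
  ring

theorem gromovProduct_add_gromovProduct (x y z : X) :
    gromovProduct x z y + gromovProduct y z x = dist x y := by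
  unfold gromovProduct
  rw [dist_comm z y, dist_comm z x, dist_comm y x]
  ring

theorem dist_eq_add_sub_two_mul_gromovProduct (x y z : X) :
    dist x z = dist x y + dist y z - 2 * gromovProduct y x z := by
  unfold gromovProduct
  rw [dist_comm y x]
  ring

theorem Isometry.gromovProduct_eq {f : X → Y} (hf : Isometry f) (x y z : X) :
    gromovProduct (f x) (f y) (f z) = gromovProduct x y z := by
  simp only [gromovProduct, hf.dist_eq]

theorem Isometry.iterate {f : X → X} (hf : Isometry f) (n : ℕ) : Isometry f^[n] := by
  induction n with
  | zero => exact isometry_id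
  | succ n ih => exact ih.comp hf

end GromovProduct

section Chain

variable {X : Type*} [MetricSpace X] {δ L P : ℝ} {y : ℕ → X}

theorem IsGromovHyperbolic.abs_gromovProduct_chain_sub_le (hX : IsGromovHyperbolic X δ)
    (hδ : 0 ≤ δ) (hL : ∀ n, dist (y n) (y (n + 1)) = L)
    (hP : ∀ n, gromovProduct (y (n + 1)) (y n) (y (n + 2)) = P) (hgap : 2 * P + 2 * δ < L)
    (n : ℕ) : |gromovProduct (y (n + 1)) (y 0) (y (n + 2)) - P| ≤ δ := by
  induction n with
  | zero => simpa [hP 0] using hδ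
  | succ n ih =>
    set w := y (n + 2)
    have hfar : L - P - δ ≤ gromovProduct w (y 0) (y (n + 1)) := by
      have hsum := gromovProduct_add_gromovProduct w (y (n + 1)) (y 0)
      rw [dist_comm, hL (n + 1)] at hsum
      linarith [(abs_le.mp ih).2]
    have hcorner : gromovProduct w (y (n + 1)) (y (n + 3)) = P := hP (n + 1)
    have hupper := hX w (y (n + 1)) (y 0) (y (n + 3))
    have hlower := hX w (y 0) (y (n + 1)) (y (n + 3))
    rw [gromovProduct_comm w (y (n + 1)), hcorner] at hupper
    rw [hcorner, min_eq_right (by linarith)] at hlower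
    show |gromovProduct w (y 0) (y (n + 3)) - P| ≤ δ
    -- `hfar` and `hgap` rule out the first entry of the minimum in `hupper`
    rcases min_le_iff.mp (sub_le_iff_le_add.mp hupper) with hfirst | hsecond
    · linarith
    · exact abs_le.mpr ⟨by linarith, by linarith⟩

theorem abs_dist_chain_sub_le (hL : ∀ n, dist (y n) (y (n + 1)) = L)
    (hc : ∀ n, |gromovProduct (y (n + 1)) (y 0) (y (n + 2)) - P| ≤ δ) (n : ℕ) :
    |dist (y 0) (y (n + 1)) - ((n + 1) * (L - 2 * P) + 2 * P)| ≤ 2 * n * δ := by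
  induction n with
  | zero => simp [hL 0]
  | succ n ih =>
    rw [dist_eq_add_sub_two_mul_gromovProduct (y 0) (y (n + 1)), hL (n + 1)]
    obtain ⟨ih₁, ih₂⟩ := abs_le.mp ih
    obtain ⟨hc₁, hc₂⟩ := abs_le.mp (hc n)
    push_cast
    exact abs_le.mpr ⟨by linarith, by linarith⟩

end Chain

theorem abs_liminf_div_sub_le {a : ℕ → ℝ} {τ b ε : ℝ}
    (h : ∀ᶠ n : ℕ in atTop, |a n - (n * τ + b)| ≤ n * ε) :
    |atTop.liminf (fun n => a n / n) - τ| ≤ ε := by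
  have hlim (c : ℝ) : Tendsto (fun n : ℕ => c + b / n) atTop (𝓝 c) := by
    simpa using tendsto_const_nhds.add (tendsto_const_div_atTop_nhds_zero_nat b)
  have hnear : ∀ᶠ n : ℕ in atTop, |a n / n - (τ + b / n)| ≤ ε := by
    filter_upwards [h, eventually_gt_atTop 0] with n hn hpos
    have hpos : (0 : ℝ) < n := by exact_mod_cast hpos
    rw [show a n / n - (τ + b / n) = (a n - (n * τ + b)) / n by field_simp,
      abs_div, abs_of_pos hpos, div_le_iff₀ hpos]
    linarith
  have hlow : ∀ᶠ n : ℕ in atTop, τ - ε + b / n ≤ a n / n := by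
    filter_upwards [hnear] with n hn
    linarith [(abs_le.mp hn).1]
  have hupp : ∀ᶠ n : ℕ in atTop, a n / n ≤ τ + ε + b / n := by
    filter_upwards [hnear] with n hn
    linarith [(abs_le.mp hn).2]
  have hbdd_le := (hlim (τ + ε)).isBoundedUnder_le.mono_le hupp
  have hbdd_ge := (hlim (τ - ε)).isBoundedUnder_ge.mono_ge hlow
  have hliminf_ge := (hlim (τ - ε)).liminf_eq ▸
    liminf_le_liminf hlow (hlim _).isBoundedUnder_ge hbdd_le.isCoboundedUnder_ge
  have hliminf_le := (hlim (τ + ε)).liminf_eq ▸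
    liminf_le_liminf hupp hbdd_ge (hlim _).isBoundedUnder_le.isCoboundedUnder_ge
  exact abs_le.mpr ⟨by linarith, by linarith⟩

/-- there is a constant `C` (so that the implied constants depend only
on δ) such that for every δ-hyperbolic space `X`, every isometry `g` of `X` and every
basepoint `x` with `d(x,gx) ≥ 2(gx, g⁻¹x)_x + C·δ + C`, the stable translation length
satisfies `τ(g) = d(x,gx) − 2(gx,g⁻¹x)_x + O(δ)`. -/
theorem translation_length_formula :
    ∃ C : ℝ, 0 < C ∧
      ∀ (X : Type) [MetricSpace X] (δ : ℝ), 0 ≤ δ →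
        (∀ w p q r : X, min (gromovProduct w p q) (gromovProduct w q r) - δ ≤
          gromovProduct w p r) →
        ∀ (g : X ≃ᵢ X) (x : X),
          2 * gromovProduct x (g x) (g.symm x) + C * δ + C ≤ dist x (g x) →
          |stableTranslationLength (⇑g) x -
              (dist x (g x) - 2 * gromovProduct x (g x) (g.symm x))| ≤ C * δ + C := by
  refine ⟨2, two_pos, fun X _ δ hδ (hX : IsGromovHyperbolic X δ) g x hgap => ?_⟩
  set L := dist x (g x)
  set P := gromovProduct x (g x) (g.symm x)
  have hL (n : ℕ) : dist (g^[n] x) (g^[n + 1] x) = L := by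
    rw [Function.iterate_succ_apply, (g.isometry.iterate n).dist_eq]
  have hP (n : ℕ) : gromovProduct (g^[n + 1] x) (g^[n] x) (g^[n + 2] x) = P := by
    have h₁ : g^[n + 1] (g.symm x) = g^[n] x := by
      rw [Function.iterate_succ_apply, g.apply_symm_apply]
    have h₂ : g^[n + 1] (g x) = g^[n + 2] x := (Function.iterate_succ_apply _ _ _).symm
    rw [← h₁, ← h₂, (g.isometry.iterate (n + 1)).gromovProduct_eq, gromovProduct_comm]
  have hdist := abs_dist_chain_sub_le (y := fun n => g^[n] x) hL
    (hX.abs_gromovProduct_chain_sub_le hδ hL hP (by linarith))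
  have hτ : |stableTranslationLength g x - (L - 2 * P)| ≤ 2 * δ := by
    refine abs_liminf_div_sub_le (a := fun n => dist x (g^[n] x)) (b := 2 * P)
      (eventually_atTop.mpr ⟨1, fun n hn => ?_⟩)
    obtain ⟨m, rfl⟩ := Nat.exists_eq_add_of_le' hn
    push_cast
    exact (hdist m).trans (by linarith)
  linarith
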